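/- arXiv:2302.11881 — 3 statements merged into one kernel-verified Lean document; each statement's English description precedes it below -/
import Mathlib

section
/- Define nested subspaces Φ_{0,j} = range B_j for j = 1,…,N, and Φ_{i,j} = A_j · (Σ_{k=1}^{j} Φ_{i-1,k}) for i ≥ 1. Let W_i = Σ_{k=0}^{i} Σ_{j=1}^{N} Φ_{k,j}. Then the sequence (W_i) is increasing (W_i ⊆ W_{i+1}), and W_j = W_{N(n-1)} for all j ≥ N(n−1); moreover W_{N(n-1)} equals Ω̄ = Σ over k=1,…,N and exponent tuples j_k,…,j_N ∈ {0,…,n−1} of A_N^{j_N} ⋯ A_k^{j_k} (range B_k). -/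
open MeasureTheory

/-- The controllable subspace `⟨A|B⟩ = Σ_{i=0}^{n-1} A^i (range B)`. -/
def ctrlSub {n m : ℕ} (A : Matrix (Fin n) (Fin n) ℝ) (B : Matrix (Fin n) (Fin m) ℝ) :
    Submodule ℝ (Fin n → ℝ) :=
  ⨆ i : Fin n, Submodule.map ((A ^ (i : ℕ)).mulVecLin) (LinearMap.range B.mulVecLin)

/-- `Γ_A V = Σ_{i=0}^{n-1} A^i V`. -/
def gammaSub {n : ℕ} (A : Matrix (Fin n) (Fin n) ℝ) (V : Submodule ℝ (Fin n → ℝ)) :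
    Submodule ℝ (Fin n → ℝ) :=
  ⨆ i : Fin n, Submodule.map ((A ^ (i : ℕ)).mulVecLin) V

/-- Descending ordered product `E (b-1) * E (b-2) * ⋯ * E a` (equals `1` if `b ≤ a`). -/
def descProd {n : ℕ} (E : ℕ → Matrix (Fin n) (Fin n) ℝ) (a : ℕ) : ℕ → Matrix (Fin n) (Fin n) ℝ
  | 0 => 1
  | b + 1 => if a ≤ b then E b * descProd E a b else 1

/-- Ascending ordered product `F 0 * F 1 * ⋯ * F (b-1)`. -/
def ascProd {n : ℕ} (F : ℕ → Matrix (Fin n) (Fin n) ℝ) : ℕ → Matrix (Fin n) (Fin n) ℝ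
  | 0 => 1
  | b + 1 => ascProd F b * F b

/-- `Ω̄` as in the paper (subsystems indexed from `0`). -/
def omegaBar {n : ℕ} (N : ℕ) (m : ℕ → ℕ) (A : ℕ → Matrix (Fin n) (Fin n) ℝ)
    (B : ∀ i, Matrix (Fin n) (Fin (m i)) ℝ) : Submodule ℝ (Fin n → ℝ) :=
  ⨆ k ∈ Finset.range N, ⨆ j : {f : ℕ → ℕ // ∀ i, f i < n},
    Submodule.map (descProd (fun i => A i ^ j.1 i) k N).mulVecLin
      (LinearMap.range (B k).mulVecLin)

/-- The nested subspaces `Φ_{0,j} = range B_j`, `Φ_{i,j} = A_j · (Σ_{k=0}^{j} Φ_{i-1,k})`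
(subsystems indexed from `0`). -/
def phiSub {n : ℕ} (m : ℕ → ℕ) (A : ℕ → Matrix (Fin n) (Fin n) ℝ)
    (B : ∀ i, Matrix (Fin n) (Fin (m i)) ℝ) : ℕ → ℕ → Submodule ℝ (Fin n → ℝ)
  | 0, j => LinearMap.range (B j).mulVecLin
  | i + 1, j => Submodule.map (A j).mulVecLin (⨆ k ∈ Finset.range (j + 1), phiSub m A B i k)

/-- `W_i = Σ_{k=0}^{i} Σ_{j=0}^{N-1} Φ_{k,j}`. -/
def WSub {n : ℕ} (N : ℕ) (m : ℕ → ℕ) (A : ℕ → Matrix (Fin n) (Fin n) ℝ)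
    (B : ∀ i, Matrix (Fin n) (Fin (m i)) ℝ) (i : ℕ) : Submodule ℝ (Fin n → ℝ) :=
  ⨆ k ∈ Finset.range (i + 1), ⨆ j ∈ Finset.range N, phiSub m A B k j

/-!
Write `Ω̄_b` for `omegaBar b`, the space built from the first `b` subsystems. By
Cayley–Hamilton every power `A_j ^ e` is a combination of the `A_j ^ t` with `t < n`, so
`Ω̄_{j+1}` is `A_j`-invariant; as `Ω̄_b` also grows with `b`, induction on `i` puts every
`Φ_{i,j}` inside `Ω̄_{j+1} ≤ Ω̄_N`. Conversely `A_j ^ e` maps `Σ_{k ≤ j} Φ_{l,k}` into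
`Σ_{k ≤ j} Φ_{l+e,k}`, so a generator `A_{N-1}^{e_{N-1}} ⋯ A_k^{e_k} (range B_k)` of `Ω̄_N`
lies in `W_L` with `L = Σ e_i ≤ N (n - 1)`.
-/

theorem Matrix.map_mulVecLin_mul {R ι κ μ : Type*} [CommRing R] [Fintype κ] [Fintype μ]
    (M : Matrix ι κ R) (M' : Matrix κ μ R) (V : Submodule R (μ → R)) :
    V.map (M * M').mulVecLin = (V.map M'.mulVecLin).map M.mulVecLin := by
  rw [Matrix.mulVecLin_mul, Submodule.map_comp]

open Polynomial in
theorem Matrix.map_pow_mulVecLin_le {R ι : Type*} [CommRing R] [Nontrivial R] [Fintype ι]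
    [DecidableEq ι] [Nonempty ι] (A : Matrix ι ι R) (V : Submodule R (ι → R)) (k : ℕ) :
    V.map (A ^ k).mulVecLin ≤ ⨆ t < Fintype.card ι, V.map (A ^ t).mulVecLin := by
  have hdeg : (X ^ k %ₘ A.charpoly).natDegree < Fintype.card ι := by
    rw [← A.charpoly_natDegree_eq_dim]
    refine natDegree_modByMonic_lt _ A.charpoly_monic fun h => ?_
    have := A.charpoly_natDegree_eq_dim
    rw [h, natDegree_one] at this
    exact Fintype.card_ne_zero this.symm
  rintro _ ⟨v, hv, rfl⟩
  rw [Matrix.mulVecLin_apply, A.pow_eq_aeval_mod_charpoly, aeval_eq_sum_range' hdeg,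
    Matrix.sum_mulVec]
  refine Submodule.sum_mem _ fun t ht => ?_
  rw [Matrix.smul_mulVec]
  exact Submodule.smul_mem _ _ <| Submodule.mem_iSup_of_mem t <|
    Submodule.mem_iSup_of_mem (Finset.mem_range.mp ht) ⟨v, hv, rfl⟩

theorem Function.update_lt {α : Type*} [DecidableEq α] {f : α → ℕ} {n : ℕ}
    (hf : ∀ i, f i < n) {j : α} {t : ℕ} (ht : t < n) : ∀ i, Function.update f j t i < n :=
  (Function.forall_update_iff f fun _ v => v < n).2 ⟨ht, fun i _ => hf i⟩

section DescProd

variable {n : ℕ} (E : ℕ → Matrix (Fin n) (Fin n) ℝ)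

theorem descProd_self (a : ℕ) : descProd E a a = 1 := by
  cases a <;> simp [descProd]

theorem descProd_succ {a b : ℕ} (h : a ≤ b) : descProd E a (b + 1) = E b * descProd E a b := by
  simp [descProd, h]

theorem descProd_congr {E' : ℕ → Matrix (Fin n) (Fin n) ℝ} {a b : ℕ}
    (h : ∀ i, a ≤ i → i < b → E i = E' i) : descProd E a b = descProd E' a b := by
  induction b with
  | zero => rfl
  | succ b ih =>
    by_cases hab : a ≤ b
    · rw [descProd_succ E hab, descProd_succ E' hab, h b hab b.lt_succ_self,
        ih fun i hi hib => h i hi (Nat.lt_succ_of_lt hib)]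
    · simp [descProd, hab]

theorem descProd_update {a b : ℕ} (h : a ≤ b) (M : Matrix (Fin n) (Fin n) ℝ) :
    descProd (Function.update E b M) a (b + 1) = M * descProd E a b := by
  rw [descProd_succ _ h, Function.update_self]
  congr 1
  exact descProd_congr _ fun i _ hib => Function.update_of_ne hib.ne _ _

end DescProd

section OmegaBar

variable {n : ℕ} {m : ℕ → ℕ} {A : ℕ → Matrix (Fin n) (Fin n) ℝ}
  {B : ∀ i, Matrix (Fin n) (Fin (m i)) ℝ}

theorem map_descProd_le_omegaBar {k b : ℕ} (hk : k < b) {f : ℕ → ℕ} (hf : ∀ i, f i < n) :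
    (LinearMap.range (B k).mulVecLin).map (descProd (fun i => A i ^ f i) k b).mulVecLin ≤
      omegaBar b m A B :=
  le_iSup₂_of_le k (Finset.mem_range.mpr hk)
    (le_iSup_of_le (⟨f, hf⟩ : {f : ℕ → ℕ // ∀ i, f i < n}) le_rfl)

theorem descProd_pow_update {k j : ℕ} (h : k ≤ j) (f : ℕ → ℕ) (t : ℕ) :
    descProd (fun i => A i ^ Function.update f j t i) k (j + 1) =
      A j ^ t * descProd (fun i => A i ^ f i) k j := by
  rw [← descProd_update _ h]
  congr 1
  funext i
  exact Function.apply_update (fun i e => A i ^ e) f j t i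

theorem omegaBar_le_succ (b : ℕ) : omegaBar b m A B ≤ omegaBar (b + 1) m A B := by
  refine iSup₂_le fun k hk => iSup_le fun f => ?_
  have hkb : k ≤ b := (Finset.mem_range.mp hk).le
  have := map_descProd_le_omegaBar (A := A) (B := B) (Nat.lt_succ_of_lt (Finset.mem_range.mp hk))
    (Function.update_lt (j := b) f.2 (Nat.zero_lt_of_lt (f.2 0)))
  rwa [descProd_pow_update hkb, pow_zero, one_mul] at this

theorem omegaBar_mono : Monotone fun b => omegaBar b m A B :=
  monotone_nat_of_le_succ omegaBar_le_succ

theorem map_omegaBar_succ_le (j : ℕ) :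
    (omegaBar (j + 1) m A B).map (A j).mulVecLin ≤ omegaBar (j + 1) m A B := by
  rw [Submodule.map_le_iff_le_comap]
  refine iSup₂_le fun k hk => iSup_le fun f => ?_
  rw [← Submodule.map_le_iff_le_comap]
  have hkj : k ≤ j := Nat.lt_succ_iff.mp (Finset.mem_range.mp hk)
  have : Nonempty (Fin n) := ⟨⟨0, Nat.zero_lt_of_lt (f.2 0)⟩⟩
  rw [← Submodule.map_comp, ← Matrix.mulVecLin_mul, descProd_succ _ hkj, ← mul_assoc,
    ← pow_succ', Matrix.map_mulVecLin_mul]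
  refine (Matrix.map_pow_mulVecLin_le _ _ _).trans (iSup₂_le fun t ht => ?_)
  rw [← Matrix.map_mulVecLin_mul, ← descProd_pow_update hkj]
  exact map_descProd_le_omegaBar (Finset.mem_range.mp hk)
    (Function.update_lt f.2 (by simpa using ht))

theorem range_le_omegaBar_succ (j : ℕ) :
    LinearMap.range (B j).mulVecLin ≤ omegaBar (j + 1) m A B := by
  rcases n.eq_zero_or_pos with rfl | hn
  · intro x _
    rw [Subsingleton.elim x 0]
    exact zero_mem _
  · have := map_descProd_le_omegaBar (A := A) (B := B) j.lt_succ_self (f := fun _ => 0)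
      fun _ => hn
    rwa [descProd_succ _ le_rfl, descProd_self, pow_zero, one_mul, Matrix.mulVecLin_one,
      Submodule.map_id] at this

theorem phiSub_le_omegaBar (l j : ℕ) : phiSub m A B l j ≤ omegaBar (j + 1) m A B := by
  induction l generalizing j with
  | zero => exact range_le_omegaBar_succ j
  | succ l ih =>
    refine (Submodule.map_mono ?_).trans (map_omegaBar_succ_le j)
    exact iSup₂_le fun k hk => (ih k).trans (omegaBar_mono (Finset.mem_range.mp hk))

theorem WSub_le_omegaBar (N i : ℕ) : WSub N m A B i ≤ omegaBar N m A B :=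
  iSup₂_le fun l _ => iSup₂_le fun j hj =>
    (phiSub_le_omegaBar l j).trans (omegaBar_mono (Finset.mem_range.mp hj))

end OmegaBar

def phiSum {n : ℕ} (m : ℕ → ℕ) (A : ℕ → Matrix (Fin n) (Fin n) ℝ)
    (B : ∀ i, Matrix (Fin n) (Fin (m i)) ℝ) (l j : ℕ) : Submodule ℝ (Fin n → ℝ) :=
  ⨆ k ∈ Finset.range (j + 1), phiSub m A B l k

section PhiSum

variable {n : ℕ} {m : ℕ → ℕ} {A : ℕ → Matrix (Fin n) (Fin n) ℝ}
  {B : ∀ i, Matrix (Fin n) (Fin (m i)) ℝ}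

theorem phiSub_le_phiSum (l j : ℕ) : phiSub m A B l j ≤ phiSum m A B l j :=
  le_biSup (phiSub m A B l) (Finset.mem_range.mpr j.lt_succ_self)

theorem phiSum_le_succ (l j : ℕ) : phiSum m A B l j ≤ phiSum m A B l (j + 1) :=
  biSup_mono fun _ hk => Finset.mem_range.mpr (Nat.lt_succ_of_lt (Finset.mem_range.mp hk))

theorem map_pow_phiSum_le (j e : ℕ) :
    ∀ l, (phiSum m A B l j).map (A j ^ e).mulVecLin ≤ phiSum m A B (l + e) j := by
  induction e with
  | zero => simp
  | succ e ih =>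
    intro l
    rw [pow_succ, Matrix.map_mulVecLin_mul, ← add_assoc, add_right_comm]
    exact (Submodule.map_mono (phiSub_le_phiSum (l + 1) j)).trans (ih (l + 1))

theorem map_descProd_le_phiSum (f : ℕ → ℕ) {k b : ℕ} (hkb : k ≤ b) :
    (LinearMap.range (B k).mulVecLin).map (descProd (fun i => A i ^ f i) k (b + 1)).mulVecLin ≤
      phiSum m A B (∑ i ∈ Finset.Ico k (b + 1), f i) b := by
  induction b, hkb using Nat.le_induction with
  | base =>
    have := (Submodule.map_mono (phiSub_le_phiSum (m := m) (A := A) (B := B) 0 k)).trans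
      (map_pow_phiSum_le k (f k) 0)
    rw [zero_add] at this
    rwa [descProd_succ _ le_rfl, descProd_self, mul_one, Nat.Ico_succ_singleton,
      Finset.sum_singleton]
  | succ b hkb ih =>
    rw [descProd_succ _ (Nat.le_succ_of_le hkb), Matrix.map_mulVecLin_mul,
      Finset.sum_Ico_succ_top (Nat.le_succ_of_le hkb)]
    exact (Submodule.map_mono (ih.trans (phiSum_le_succ _ b))).trans (map_pow_phiSum_le _ _ _)

theorem omegaBar_le_WSub (N : ℕ) : omegaBar N m A B ≤ WSub N m A B (N * (n - 1)) := by
  refine iSup₂_le fun k hk => iSup_le fun f => ?_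
  obtain ⟨b, rfl⟩ : ∃ b, N = b + 1 := Nat.exists_eq_add_one_of_ne_zero (by
    rintro rfl; simp at hk)
  have hkb : k ≤ b := Nat.lt_succ_iff.mp (Finset.mem_range.mp hk)
  have hsum : ∑ i ∈ Finset.Ico k (b + 1), f.1 i ≤ (b + 1) * (n - 1) := by
    refine (Finset.sum_le_card_nsmul _ _ _ fun i _ => Nat.le_sub_one_of_lt (f.2 i)).trans ?_
    rw [Nat.card_Ico, smul_eq_mul]
    exact Nat.mul_le_mul_right _ (Nat.sub_le _ _)
  exact (map_descProd_le_phiSum f.1 hkb).trans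
    (le_biSup (fun l => phiSum m A B l b) (Finset.mem_range.mpr (Nat.lt_succ_of_le hsum)))

end PhiSum

theorem WSub_mono {n : ℕ} (N : ℕ) (m : ℕ → ℕ) (A : ℕ → Matrix (Fin n) (Fin n) ℝ)
    (B : ∀ i, Matrix (Fin n) (Fin (m i)) ℝ) : Monotone (WSub N m A B) :=
  fun _ _ h => biSup_mono fun _ hk =>
    Finset.mem_range.mpr ((Finset.mem_range.mp hk).trans_le (Nat.succ_le_succ h))

theorem WSub_mono_stabilizes_eq_omegaBar_general {n N : ℕ} (m : ℕ → ℕ)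
    (A : ℕ → Matrix (Fin n) (Fin n) ℝ) (B : ∀ i, Matrix (Fin n) (Fin (m i)) ℝ) :
    (∀ i, WSub N m A B i ≤ WSub N m A B (i + 1)) ∧
    (∀ j, N * (n - 1) ≤ j → WSub N m A B j = WSub N m A B (N * (n - 1))) ∧
    WSub N m A B (N * (n - 1)) = omegaBar N m A B := by
  have hle : ∀ i, WSub N m A B i ≤ omegaBar N m A B := WSub_le_omegaBar N
  have hge : omegaBar N m A B ≤ WSub N m A B (N * (n - 1)) := omegaBar_le_WSub N
  exact ⟨fun i => WSub_mono N m A B i.le_succ,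
    fun j hj => le_antisymm ((hle j).trans hge) (WSub_mono N m A B hj),
    le_antisymm (hle _) hge⟩

/-- The sequence `(W_i)` is increasing, stabilizes at index `N(n-1)`, and
`W_{N(n-1)} = Ω̄`. -/
theorem WSub_mono_stabilizes_eq_omegaBar {n N : ℕ} (hN : 1 ≤ N) (m : ℕ → ℕ)
    (A : ℕ → Matrix (Fin n) (Fin n) ℝ) (B : ∀ i, Matrix (Fin n) (Fin (m i)) ℝ) :
    (∀ i, WSub N m A B i ≤ WSub N m A B (i + 1)) ∧
    (∀ j, N * (n - 1) ≤ j → WSub N m A B j = WSub N m A B (N * (n - 1))) ∧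
    WSub N m A B (N * (n - 1)) = omegaBar N m A B :=
  WSub_mono_stabilizes_eq_omegaBar_general m A B
end

section
/- Consider A_1 = [[0,0,0],[1,0,0],[0,0,0]], B_1 = [1,0,0]ᵀ, A_2 = [[0,0,0],[0,0,0],[0,1,0]], B_2 = 0 (all 3×3 or 3×1 real matrices). Then for all h_1, h_2 > 0, the reachable set Ω_{h} = e^{A_2 h_2}⟨A_1|B_1⟩ equals {(x_1, x_2, h_2 x_2)ᵀ : x_1, x_2 ∈ ℝ}, a 2-dimensional subspace of ℝ³; and the union Ω = ⋃_{h_2 > 0} Ω_{h} is not a linear subspace of ℝ³. -/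
open Matrix Module

theorem NormedSpace.exp_eq_sum_range_of_pow_eq_zero {𝔸 : Type*} [Ring 𝔸] [Algebra ℚ 𝔸]
    [TopologicalSpace 𝔸] [IsTopologicalRing 𝔸] {x : 𝔸} {k : ℕ} (h : x ^ k = 0) :
    NormedSpace.exp x = ∑ i ∈ Finset.range k, (i.factorial⁻¹ : ℚ) • x ^ i := by
  rw [NormedSpace.exp_eq_tsum ℚ]
  refine tsum_eq_sum fun i hi => ?_
  rw [pow_eq_zero_of_le (by simpa using hi) h, smul_zero]

theorem NormedSpace.exp_eq_one_add_of_sq_eq_zero {𝔸 : Type*} [Ring 𝔸] [Algebra ℚ 𝔸]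
    [TopologicalSpace 𝔸] [IsTopologicalRing 𝔸] {x : 𝔸} (h : x ^ 2 = 0) :
    NormedSpace.exp x = 1 + x := by
  simp [NormedSpace.exp_eq_sum_range_of_pow_eq_zero h, Finset.sum_range_succ]

section ctrlSub

variable {n m : ℕ} (A : Matrix (Fin n) (Fin n) ℝ) (B : Matrix (Fin n) (Fin m) ℝ)

theorem pow_mulVec_mulVec_mem_ctrlSub (i : Fin n) (u : Fin m → ℝ) :
    (A ^ (i : ℕ)) *ᵥ (B *ᵥ u) ∈ ctrlSub A B :=
  Submodule.mem_iSup_of_mem i ⟨B *ᵥ u, ⟨u, rfl⟩, rfl⟩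

variable {A B} in
theorem ctrlSub_le_of_mulVec_mem {W : Submodule ℝ (Fin n → ℝ)} (hB : ∀ u, B *ᵥ u ∈ W)
    (hA : ∀ v ∈ W, A *ᵥ v ∈ W) : ctrlSub A B ≤ W := by
  refine iSup_le fun i => ?_
  rintro _ ⟨_, ⟨u, rfl⟩, rfl⟩
  induction (i : ℕ) with
  | zero => simpa using hB u
  | succ k ih => simpa [pow_succ', ← mulVec_mulVec] using hA _ ih

end ctrlSub

theorem ctrlSub_example_eq_ker_proj :
    ctrlSub !![(0 : ℝ), 0, 0; 1, 0, 0; 0, 0, 0] !![(1 : ℝ); 0; 0] =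
      LinearMap.ker (LinearMap.proj 2) := by
  refine le_antisymm (ctrlSub_le_of_mulVec_mem (fun u => by simp [dotProduct])
    (fun w _ => by simp [dotProduct, Fin.sum_univ_three])) fun v hv => ?_
  convert add_mem
      (Submodule.smul_mem _ (v 0) (pow_mulVec_mulVec_mem_ctrlSub _ _ (0 : Fin 3) ![1]))
      (Submodule.smul_mem _ (v 1) (pow_mulVec_mulVec_mem_ctrlSub _ _ (1 : Fin 3) ![1]))
  ext i; fin_cases i <;> simp_all [vecHead, vecTail]

theorem finrank_ker_proj {ι K : Type*} [Fintype ι] [Field K] (i : ι) :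
    finrank K (LinearMap.ker (LinearMap.proj i : (ι → K) →ₗ[K] K)) = Fintype.card ι - 1 := by
  classical
  have hrank := (LinearMap.proj i : (ι → K) →ₗ[K] K).finrank_range_add_finrank_ker
  rw [LinearMap.range_eq_top.mpr fun x => ⟨Pi.single i x, by simp⟩, finrank_top, finrank_self,
    finrank_fintype_fun_eq_card] at hrank
  omega

theorem exp_smul_example_mulVec (h : ℝ) (v : Fin 3 → ℝ) :
    NormedSpace.exp (h • !![(0 : ℝ), 0, 0; 0, 0, 0; 0, 1, 0]) *ᵥ v =
      ![v 0, v 1, v 2 + h * v 1] := by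
  rw [NormedSpace.exp_eq_one_add_of_sq_eq_zero]
  · ext i; fin_cases i <;> simp [add_mulVec, vecHead, vecTail]
  · ext i j; fin_cases i <;> fin_cases j <;> simp [sq]

theorem not_exists_submodule_coe_eq_iUnion_planes :
    ¬ ∃ S : Submodule ℝ (Fin 3 → ℝ),
      (S : Set (Fin 3 → ℝ)) = ⋃ h ∈ Set.Ioi (0 : ℝ), {v | ∃ x₁ x₂ : ℝ, v = ![x₁, x₂, h * x₂]} := by
  rintro ⟨S, hS⟩
  have hmem : ∀ h : ℝ, 0 < h → ![(0 : ℝ), 1, h] ∈ S := fun h hh => by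
    rw [← SetLike.mem_coe, hS]
    exact Set.mem_biUnion hh ⟨0, 1, by simp⟩
  have he₃ : ![(0 : ℝ), 0, 1] ∈ S := by
    convert S.sub_mem (hmem 2 two_pos) (hmem 1 one_pos) using 1
    ext i; fin_cases i <;> norm_num
  rw [← SetLike.mem_coe, hS] at he₃
  simp only [Set.mem_iUnion, Set.mem_ofPred_eq] at he₃
  obtain ⟨h, -, x₁, x₂, he⟩ := he₃
  have hx₂ : (0 : ℝ) = x₂ := by simpa using congrFun he 1
  have hh : (1 : ℝ) = h * x₂ := by simpa using congrFun he 2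
  rw [← hx₂, mul_zero] at hh
  exact one_ne_zero hh

/-- Example 1 of the paper: for the given `(A₁,B₁)`, `(A₂,B₂ = 0)`, for all `h₂ > 0` the
reachable subspace `Ω_h = e^{A₂h₂}⟨A₁|B₁⟩` equals `{(x₁, x₂, h₂x₂)ᵀ}`, a 2-dimensional
subspace of `ℝ³`, while the union `Ω = ⋃_{h₂>0} Ω_h` is not a linear subspace. -/
theorem reachable_union_not_subspace :
    let A₁ : Matrix (Fin 3) (Fin 3) ℝ := !![0,0,0; 1,0,0; 0,0,0]
    let B₁ : Matrix (Fin 3) (Fin 1) ℝ := !![1; 0; 0]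
    let A₂ : Matrix (Fin 3) (Fin 3) ℝ := !![0,0,0; 0,0,0; 0,1,0]
    let Ωh : ℝ → Submodule ℝ (Fin 3 → ℝ) := fun h₂ =>
      Submodule.map (NormedSpace.exp (h₂ • A₂)).mulVecLin (ctrlSub A₁ B₁)
    (∀ h₂ : ℝ, 0 < h₂ →
      (Ωh h₂ : Set (Fin 3 → ℝ)) = {v | ∃ x₁ x₂ : ℝ, v = ![x₁, x₂, h₂ * x₂]} ∧
      Module.finrank ℝ (Ωh h₂) = 2) ∧
    ¬ ∃ S : Submodule ℝ (Fin 3 → ℝ),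
        (S : Set (Fin 3 → ℝ)) = ⋃ h₂ ∈ Set.Ioi (0 : ℝ), (Ωh h₂ : Set (Fin 3 → ℝ)) := by
  intro A₁ B₁ A₂ Ωh
  have hctrl : ctrlSub A₁ B₁ = LinearMap.ker (LinearMap.proj 2) := ctrlSub_example_eq_ker_proj
  have hΩ (h₂ : ℝ) : (Ωh h₂ : Set (Fin 3 → ℝ)) = {v | ∃ x₁ x₂ : ℝ, v = ![x₁, x₂, h₂ * x₂]} := by
    have hexp (v : Fin 3 → ℝ) : NormedSpace.exp (h₂ • A₂) *ᵥ v = ![v 0, v 1, v 2 + h₂ * v 1] :=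
      exp_smul_example_mulVec h₂ v
    ext v
    simp only [Ωh, hctrl, Submodule.map_coe, Set.mem_image, SetLike.mem_coe, LinearMap.mem_ker,
      LinearMap.proj_apply, mulVecLin_apply, hexp, Set.mem_ofPred_eq]
    constructor
    · rintro ⟨w, hw, rfl⟩
      exact ⟨w 0, w 1, by simp [hw]⟩
    · rintro ⟨x₁, x₂, rfl⟩
      exact ⟨![x₁, x₂, 0], rfl, by simp⟩
  refine ⟨fun h₂ _ => ⟨hΩ h₂, ?_⟩, ?_⟩
  · have hinj := mulVec_injective_of_isUnit (isUnit_exp (h₂ • A₂))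
    rw [← (Submodule.equivMapOfInjective _ hinj _).finrank_eq, hctrl, finrank_ker_proj]
    rfl
  · simpa only [hΩ] using not_exists_submodule_coe_eq_iUnion_planes
end

section
/- In the greedy maximum-coverage-with-partition setting, the first two greedy iterations satisfy: |V_{i₁*}| ≥ |Ṽ*|/N and |Ṽ_2| = |V_{i₁*} ∪ V_{i₂*}| ≥ |Ṽ*|/(N−1) + ((N−3)/(N−1))·|V_{i₁*}| for N ≥ 2. -/
open Finset

variable {X : Type*} [Fintype X] [DecidableEq X]

/-- The union of the greedy picks made before iteration `t`. -/
def greedyUnion (g : ℕ → Finset X) (t : ℕ) : Finset X := (Finset.range t).biUnion g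

/-- The hypotheses modelling problem `P` and the greedy Algorithm 1:
`U i` is the (nonempty, downward-closed) family of candidate sets of collection `i`;
`Vstar` is an optimal selection; at iteration `t < N` the greedy algorithm picks the
not-yet-used collection `ord t` and a set `g t ∈ U (ord t)` maximizing the size of the
union with everything picked so far. -/
structure GreedySetting (N : ℕ) (U : Fin N → Set (Finset X)) (Vstar : Fin N → Finset X)
    (ord : ℕ → Fin N) (g : ℕ → Finset X) : Prop where
  nonempty : ∀ i, (U i).Nonempty
  downClosed : ∀ i, ∀ V ∈ U i, ∀ W ⊆ V, W ∈ U i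
  star_mem : ∀ i, Vstar i ∈ U i
  star_opt : ∀ W : Fin N → Finset X, (∀ i, W i ∈ U i) →
    (Finset.univ.biUnion W).card ≤ (Finset.univ.biUnion Vstar).card
  ord_inj : ∀ s t, s < N → t < N → ord s = ord t → s = t
  pick_mem : ∀ t < N, g t ∈ U (ord t)
  pick_greedy : ∀ t < N, ∀ i : Fin N, (∀ s < t, ord s ≠ i) → ∀ V ∈ U i,
    (greedyUnion g t ∪ V).card ≤ (greedyUnion g t ∪ g t).card


/-! Since `g 0` is at least as large as every `V_i*`, `N · |g 0|` bounds `|Ṽ*|`. For the second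
pick, cover `Ṽ*` by `g 0` and the pieces `V_i* \ g 0`: the piece of `V_{i₁*}` costs at most `|g 0|`,
and by the greedy choice of `g 1` each of the other `N − 1` pieces costs at most
`|g 0 ∪ g 1| − |g 0|`. -/

section Covering

variable {α ι : Type*} [DecidableEq α]

theorem card_biUnion_le_card_add_sum_card_sdiff (s : Finset ι) (V : ι → Finset α)
    (A : Finset α) : #(s.biUnion V) ≤ #A + ∑ i ∈ s, #(V i \ A) := by
  have hcover : s.biUnion V ⊆ A ∪ s.biUnion fun i => V i \ A := by
    intro x
    simp only [mem_biUnion, mem_union, mem_sdiff]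
    tauto
  calc #(s.biUnion V) ≤ #(A ∪ s.biUnion fun i => V i \ A) := card_le_card hcover
    _ ≤ #A + #(s.biUnion fun i => V i \ A) := card_union_le _ _
    _ ≤ #A + ∑ i ∈ s, #(V i \ A) := by grw [card_biUnion_le]

theorem card_biUnion_add_le_of_card_union_le [Fintype ι] [DecidableEq ι] (V : ι → Finset α)
    (A : Finset α) (i₀ : ι) {b : ℕ} (h₀ : #(V i₀) ≤ #A) (h : ∀ i ≠ i₀, #(A ∪ V i) ≤ b) :
    #(univ.biUnion V) + (Fintype.card ι - 1) * #A ≤ 2 * #A + (Fintype.card ι - 1) * b := by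
  have hfirst : #(V i₀ \ A) ≤ #A := (card_le_card sdiff_subset).trans h₀
  have hrest : ∑ i ∈ univ.erase i₀, (#(V i \ A) + #A) ≤ ∑ _i ∈ univ.erase i₀, b :=
    sum_le_sum fun i hi => by
      rw [card_sdiff_add_card, union_comm]
      exact h i (ne_of_mem_erase hi)
  have hcover := card_biUnion_le_card_add_sum_card_sdiff univ V A
  rw [← add_sum_erase _ _ (mem_univ i₀)] at hcover
  rw [sum_add_distrib, sum_const, sum_const, card_erase_of_mem (mem_univ _), card_univ,
    smul_eq_mul, smul_eq_mul] at hrest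
  linarith

end Covering

namespace GreedySetting

variable {α : Type*} [DecidableEq α] {N : ℕ} {U : Fin N → Set (Finset α)}
  {Vstar : Fin N → Finset α} {ord : ℕ → Fin N} {g : ℕ → Finset α}

theorem card_le_card_pick_zero (hs : GreedySetting N U Vstar ord g) (hN : 0 < N) {i : Fin N}
    {V : Finset α} (hV : V ∈ U i) : #V ≤ #(g 0) := by
  simpa [greedyUnion] using hs.pick_greedy 0 hN i (by simp) V hV

theorem card_union_le_card_pick_zero_union_pick_one (hs : GreedySetting N U Vstar ord g)
    (hN : 1 < N) {i : Fin N} (hi : i ≠ ord 0) {V : Finset α} (hV : V ∈ U i) :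
    #(g 0 ∪ V) ≤ #(g 0 ∪ g 1) := by
  simpa [greedyUnion] using hs.pick_greedy 1 hN i (by simpa [eq_comm] using hi) V hV

end GreedySetting

/-- The first two greedy iterations satisfy `|V_{i₁*}| ≥ |Ṽ*|/N` and
`|Ṽ₂| = |V_{i₁*} ∪ V_{i₂*}| ≥ |Ṽ*|/(N−1) + ((N−3)/(N−1))·|V_{i₁*}|` for `N ≥ 2`. -/
theorem greedy_first_two_iterations {N : ℕ} (hN : 2 ≤ N) (U : Fin N → Set (Finset X))
    (Vstar : Fin N → Finset X) (ord : ℕ → Fin N) (g : ℕ → Finset X)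
    (hs : GreedySetting N U Vstar ord g) :
    (((g 0).card : ℝ) ≥ ((Finset.univ.biUnion Vstar).card : ℝ) / N) ∧
    (((g 0 ∪ g 1).card : ℝ) ≥
        ((Finset.univ.biUnion Vstar).card : ℝ) / ((N : ℝ) - 1) +
          (((N : ℝ) - 3) / ((N : ℝ) - 1)) * ((g 0).card : ℝ)) := by
  have hstar (i : Fin N) : #(Vstar i) ≤ #(g 0) :=
    hs.card_le_card_pick_zero (by omega) (hs.star_mem i)
  have hfirst : #(univ.biUnion Vstar) ≤ N * #(g 0) := by
    simpa using card_biUnion_le_card_mul univ Vstar _ fun i _ => hstar i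
  have hsecond := card_biUnion_add_le_of_card_union_le Vstar (g 0) (ord 0) (hstar _)
    fun i hi => hs.card_union_le_card_pick_zero_union_pick_one (by omega) hi (hs.star_mem i)
  rw [Fintype.card_fin] at hsecond
  have hN' : (2 : ℝ) ≤ N := by exact_mod_cast hN
  constructor
  · rw [ge_iff_le, div_le_iff₀ (by positivity)]
    exact_mod_cast hfirst.trans_eq (mul_comm _ _)
  · have hsecond' : (#(univ.biUnion Vstar) : ℝ) + (N - 1) * #(g 0) ≤
        2 * #(g 0) + (N - 1) * #(g 0 ∪ g 1) := by
      have h1N : 1 ≤ N := by omega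
      exact_mod_cast hsecond
    rw [ge_iff_le, div_mul_eq_mul_div, ← add_div, div_le_iff₀ (by linarith)]
    linarith
end
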